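/- arXiv:1304.6456 — 4 statements merged into one kernel-verified Lean document; each statement's English description precedes it below -/
import Mathlib

section
/- Let U ⊆ ℝ^d × ℝ^d be a Lebesgue measurable set of positive measure. Then for all sufficiently small δ > 0 there exists a measurable subset V ⊆ U of positive measure such that for every (x,y) ∈ V, the three points (x+δΔ, y), (x, y+δΔ), and (x+δΔ, y+δΔ) all belong to U, where Δ = (1,...,1) ∈ ℝ^d. -/
open MeasureTheory Filter Topology Set
open scoped symmDiff ENNReal

/-!
Translation is continuous in measure: for `S` of finite positive measure,
`μ (S \ (S - v)) → 0` as `v → 0`. Hence for finitely many small shifts `vᵢ`, the points of `S`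
whose shifts `x + vᵢ` all stay in `S` still form a set of positive measure. Apply this to a
finite-measure piece `S ⊆ U` and the three shifts `(δΔ, 0)`, `(0, δΔ)`, `(δΔ, δΔ)`, which tend
to `0` with `δ`.
-/

theorem measure_le_inter_iInter_add_sum_sdiff {α ι : Type*} [MeasurableSpace α] [Fintype ι]
    (ν : Measure α) (s : Set α) (t : ι → Set α) :
    ν s ≤ ν (s ∩ ⋂ i, t i) + ∑ i, ν (s \ t i) := by
  calc ν s ≤ ν (s ∩ ⋂ i, t i) + ν (s \ ⋂ i, t i) := measure_le_inter_add_sdiff ν s _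
    _ ≤ ν (s ∩ ⋂ i, t i) + ∑ i, ν (s \ t i) := by
      rw [sdiff_iInter]
      gcongr
      exact measure_iUnion_fintype_le ν _

section

variable {G : Type*} [AddGroup G] [TopologicalSpace G] [IsTopologicalAddGroup G]
  [MeasurableSpace G] [BorelSpace G] {μ : Measure G} [μ.IsAddRightInvariant]
  [μ.InnerRegularCompactLTTop] [IsLocallyFiniteMeasure μ]

theorem tendsto_measure_sdiff_preimage_add_right_nhds_zero {s : Set G} (hs : MeasurableSet s)
    (hμs : μ s ≠ ∞) : Tendsto (fun v ↦ μ (s \ (· + v) ⁻¹' s)) (𝓝 0) (𝓝 0) := by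
  let addRight : C(G, C(G, G)) := ContinuousMap.curry ⟨fun q : G × G ↦ q.2 + q.1, by fun_prop⟩
  have hsymm : Tendsto (fun v ↦ μ ((addRight v ⁻¹' s) ∆ (addRight 0 ⁻¹' s))) (𝓝 0) (𝓝 0) :=
    tendsto_measure_symmDiff_preimage_nhds_zero (addRight.continuous.tendsto 0)
      (.of_forall fun v ↦ measurePreserving_add_right μ v) (measurePreserving_add_right μ 0)
      hs.nullMeasurableSet hμs
  refine tendsto_of_tendsto_of_tendsto_of_le_of_le tendsto_const_nhds hsymm (fun _ ↦ zero_le)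
    fun v ↦ measure_mono ?_
  show s \ _ ⊆ ((· + v) ⁻¹' s) ∆ ((· + 0) ⁻¹' s)
  simp only [add_zero, preimage_id']
  exact subset_union_right

theorem eventually_measure_inter_iInter_preimage_add_right_pos {ι : Type*} [Fintype ι]
    {s : Set G} (hs : MeasurableSet s) (hμs₀ : 0 < μ s) (hμs : μ s ≠ ∞) :
    ∀ᶠ v : ι → G in 𝓝 0, 0 < μ (s ∩ ⋂ i, (· + v i) ⁻¹' s) := by
  have hsum : Tendsto (fun v : ι → G ↦ ∑ i, μ (s \ (· + v i) ⁻¹' s)) (𝓝 0) (𝓝 0) := by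
    simpa using tendsto_finsetSum Finset.univ fun i _ ↦
      (tendsto_measure_sdiff_preimage_add_right_nhds_zero hs hμs).comp
        ((continuous_apply i).tendsto (0 : ι → G))
  filter_upwards [hsum.eventually_lt_const hμs₀] with v hv
  refine pos_iff_ne_zero.2 fun h ↦ ?_
  have hle := measure_le_inter_iInter_add_sum_sdiff μ s fun i ↦ (· + v i) ⁻¹' s
  rw [h, zero_add] at hle
  exact (hle.trans_lt hv).false

end

/-- Marginal-preserving volume exchange: if `U ⊆ ℝ^d × ℝ^d` has positive measure,
then for all sufficiently small `δ > 0` there is `V ⊆ U` of positive measure such that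
for every `(x,y) ∈ V` the three translates `(x+δΔ,y)`, `(x,y+δΔ)`, `(x+δΔ,y+δΔ)`
lie in `U`, where `Δ = (1,…,1)`. -/
theorem stmt0 (d : ℕ) (U : Set ((Fin d → ℝ) × (Fin d → ℝ)))
    (hU : MeasurableSet U) (hpos : 0 < volume U) :
    ∃ δ₀ > (0:ℝ), ∀ δ : ℝ, 0 < δ → δ < δ₀ →
      ∃ V : Set ((Fin d → ℝ) × (Fin d → ℝ)), V ⊆ U ∧ MeasurableSet V ∧ 0 < volume V ∧
        ∀ p ∈ V,
          (p.1 + δ • (fun _ => (1:ℝ)), p.2) ∈ U ∧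
          (p.1, p.2 + δ • (fun _ => (1:ℝ))) ∈ U ∧
          (p.1 + δ • (fun _ => (1:ℝ)), p.2 + δ • (fun _ => (1:ℝ))) ∈ U := by
  -- `volume` on a product is not reducibly `volume.prod volume`, so instance search misses this.
  have : (volume : Measure ((Fin d → ℝ) × (Fin d → ℝ))).IsAddRightInvariant :=
    inferInstanceAs ((volume.prod volume).IsAddRightInvariant)
  obtain ⟨S, hS, hSU, hS₀, hSfin⟩ := Measure.exists_subset_measure_lt_top hU hpos
  set Δ : Fin d → ℝ := fun _ ↦ 1
  let shifts (δ : ℝ) : Fin 3 → (Fin d → ℝ) × (Fin d → ℝ) :=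
    ![(δ • Δ, 0), (0, δ • Δ), (δ • Δ, δ • Δ)]
  have hshifts : Tendsto shifts (𝓝 0) (𝓝 0) := by
    have hzero : shifts 0 = 0 := by ext i : 1; fin_cases i <;> simp [shifts]
    simpa only [hzero] using (show Continuous shifts by fun_prop).tendsto 0
  obtain ⟨δ₀, hδ₀, hgood⟩ := Metric.eventually_nhds_iff.1 <| hshifts.eventually <|
    eventually_measure_inter_iInter_preimage_add_right_pos hS hS₀ hSfin.ne
  refine ⟨δ₀, hδ₀, fun δ hδ hδδ₀ ↦ ⟨S ∩ ⋂ i, (· + shifts δ i) ⁻¹' S, ?_, ?_, ?_, ?_⟩⟩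
  · exact inter_subset_left.trans hSU
  · exact hS.inter (.iInter fun i ↦ hS.preimage (measurable_add_const _))
  · exact hgood (by rwa [Real.dist_0_eq_abs, abs_of_pos hδ])
  · rintro ⟨x, y⟩ hp
    have hmem (i : Fin 3) : (x, y) + shifts δ i ∈ U := hSU (mem_iInter.1 hp.2 i)
    refine ⟨?_, ?_, ?_⟩
    · simpa [shifts] using hmem 0
    · simpa [shifts] using hmem 1
    · simpa [shifts] using hmem 2
end

section
/- Let z₀ be a point of Lebesgue density 1 of a measurable set U ⊆ ℝ^{2d}. Then for all sufficiently small δ > 0, the set V of points (x,y) in the open cube z₀ + (-δ,0)^d × (-δ,0)^d such that (x,y), (x+δΔ,y), (x,y+δΔ), (x+δΔ,y+δΔ) all lie in U has positive Lebesgue measure. -/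
/-!
Let `Q = z₀ + (-δ,0)^d × (-δ,0)^d` and let `B` be the ball of radius `δ` about `z₀`; in the sup
metric `B` is a cube of side `2δ`, so `|B| = 4^d |Q|`. The four translates of `Q` by `0`, `(δΔ,0)`,
`(0,δΔ)`, `(δΔ,δΔ)` lie in `B`, so by translation invariance the points of `Q` whose translate
misses `U` form a set of measure at most `|B \ U|`. Density 1 gives `|B \ U| < |B| / (4 · 4^d)`
for small `δ`, so the four exceptional sets have total measure `< |Q|` and cannot cover `Q`.
-/

open MeasureTheory Set Metric Filter Topology ENNReal

section
variable {α : Type*} [MeasurableSpace α] {μ : Measure α}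

theorem eventually_measure_diff_lt_mul {ι : Type*} {l : Filter ι} {U : Set α}
    (hU : MeasurableSet U) {s : ι → Set α} (hs : ∀ i, μ (s i) ≠ ∞)
    (hs₀ : ∀ᶠ i in l, μ (s i) ≠ 0)
    (h : Tendsto (fun i => μ (U ∩ s i) / μ (s i)) l (𝓝 1)) {ε : ℝ≥0∞} (hε : ε ≠ 0) :
    ∀ᶠ i in l, μ (s i \ U) < ε * μ (s i) := by
  filter_upwards [hs₀,
    h.eventually (lt_mem_nhds (ENNReal.sub_lt_self one_ne_top one_ne_zero hε))] with i hi₀ hi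
  rcases eq_or_ne ε ∞ with rfl | hε'
  · exact (ENNReal.top_mul hi₀).symm ▸ measure_lt_top_of_subset sdiff_subset (hs i)
  have hinter : (1 - ε) * μ (s i) < μ (s i ∩ U) := by
    rw [inter_comm]
    exact (ENNReal.lt_div_iff_mul_lt (.inl hi₀) (.inl (hs i))).mp hi
  have hfin : μ (s i ∩ U) ≠ ∞ := ne_top_of_le_ne_top (hs i) (measure_mono inter_subset_left)
  refine (ENNReal.add_lt_add_iff_left hfin).mp ?_
  calc μ (s i ∩ U) + μ (s i \ U) = μ (s i) := measure_inter_add_sdiff (s i) hU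
    _ ≤ (1 - ε) * μ (s i) + ε * μ (s i) := by
        rw [← add_mul]
        exact le_mul_of_one_le_left' le_tsub_add
    _ < μ (s i ∩ U) + ε * μ (s i) := by gcongr; exact mul_ne_top hε' (hs i)

theorem measure_pos_of_sum_measure_diff_lt {κ : Type*} [Fintype κ] {Q : Set α}
    {A : κ → Set α} (h : ∑ k, μ (Q \ A k) < μ Q) : 0 < μ (Q ∩ ⋂ k, A k) := by
  refine pos_iff_ne_zero.mpr fun h0 => h.not_ge ?_
  calc μ Q ≤ μ ((Q ∩ ⋂ k, A k) ∪ ⋃ k, Q \ A k) := measure_mono fun p hp => by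
        by_cases hA : ∀ k, p ∈ A k
        · exact .inl ⟨hp, mem_iInter.mpr hA⟩
        · obtain ⟨k, hk⟩ := not_forall.mp hA
          exact .inr (mem_iUnion.mpr ⟨k, hp, hk⟩)
    _ ≤ μ (Q ∩ ⋂ k, A k) + ∑ k, μ (Q \ A k) :=
        (measure_union_le _ _).trans (by gcongr; exact measure_iUnion_fintype_le _ _)
    _ = ∑ k, μ (Q \ A k) := by rw [h0, zero_add]

theorem measure_diff_preimage_add_right_le {G : Type*} [MeasurableSpace G] [AddGroup G]
    [MeasurableAdd G] {μ : Measure G} [μ.IsAddRightInvariant] {Q B U : Set G} {w : G}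
    (hQB : ∀ p ∈ Q, p + w ∈ B) : μ (Q \ (· + w) ⁻¹' U) ≤ μ (B \ U) :=
  calc μ (Q \ (· + w) ⁻¹' U) ≤ μ ((· + w) ⁻¹' (B \ U)) :=
        measure_mono fun p ⟨hp, hpU⟩ => ⟨hQB p hp, hpU⟩
    _ = μ (B \ U) := measure_preimage_add_right μ w _

theorem measure_pos_of_card_mul_lt {G κ : Type*} [MeasurableSpace G] [AddGroup G]
    [MeasurableAdd G] {μ : Measure G} [μ.IsAddRightInvariant] [Fintype κ] {Q B U : Set G}
    {w : κ → G} (hQB : ∀ k, ∀ p ∈ Q, p + w k ∈ B) (h : Fintype.card κ * μ (B \ U) < μ Q) :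
    0 < μ (Q ∩ ⋂ k, (· + w k) ⁻¹' U) := by
  refine measure_pos_of_sum_measure_diff_lt (h.trans_le' ?_)
  calc ∑ k, μ (Q \ (· + w k) ⁻¹' U) ≤ ∑ _k : κ, μ (B \ U) :=
        Finset.sum_le_sum fun k _ => measure_diff_preimage_add_right_le (hQB k)
    _ = Fintype.card κ * μ (B \ U) := by rw [Finset.sum_const, nsmul_eq_mul, Finset.card_univ]
end

theorem ite_smul_one_mem_Icc {ι : Type*} {δ : ℝ} (hδ : 0 ≤ δ) (b : Bool) (i : ι) :
    (if b then δ • fun _ : ι => (1 : ℝ) else 0) i ∈ Icc 0 δ := by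
  cases b <;> simp [hδ]

section
variable {ι κ : Type*} [Fintype ι] [Fintype κ]

def lowerCube (x : ι → ℝ) (δ : ℝ) : Set (ι → ℝ) := univ.pi fun i => Ioo (x i - δ) (x i)

theorem volume_lowerCube (x : ι → ℝ) (δ : ℝ) :
    volume (lowerCube x δ) = ENNReal.ofReal δ ^ Fintype.card ι := by
  simp [lowerCube, volume_pi_pi, Real.volume_Ioo, Finset.prod_const]

theorem volume_ball_eq_two_pow_mul_volume_lowerCube (x : ι → ℝ) {δ : ℝ} (hδ : 0 < δ) :
    volume (ball x δ) = 2 ^ Fintype.card ι * volume (lowerCube x δ) := by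
  rw [Real.volume_pi_ball x hδ, volume_lowerCube, ← mul_pow, ENNReal.ofReal_pow (by positivity),
    ENNReal.ofReal_mul zero_le_two, ENNReal.ofReal_ofNat]

theorem add_mem_ball_of_mem_lowerCube {x p w : ι → ℝ} {δ : ℝ} (hδ : 0 < δ)
    (hp : p ∈ lowerCube x δ) (hw : ∀ i, w i ∈ Icc 0 δ) : p + w ∈ ball x δ := by
  rw [ball_pi x hδ]
  intro i _
  have hpi := hp i (mem_univ i)
  simp only [Pi.add_apply, mem_Ioo, Real.ball_eq_Ioo] at hpi ⊢
  constructor <;> linarith [(hw i).1, (hw i).2]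

theorem volume_ball_prod_eq (z : (ι → ℝ) × (κ → ℝ)) {δ : ℝ} (hδ : 0 < δ) :
    volume (ball z δ) =
      2 ^ (Fintype.card ι + Fintype.card κ) * volume (lowerCube z.1 δ ×ˢ lowerCube z.2 δ) := by
  rw [← ball_prod_same, Measure.volume_eq_prod, Measure.prod_prod, Measure.prod_prod,
    volume_ball_eq_two_pow_mul_volume_lowerCube _ hδ,
    volume_ball_eq_two_pow_mul_volume_lowerCube _ hδ, pow_add]
  ring

theorem nat_mul_lt_volume_lowerCube_prod {z : (ι → ℝ) × (κ → ℝ)} {δ : ℝ} (hδ : 0 < δ)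
    {U : Set ((ι → ℝ) × (κ → ℝ))} {n : ℕ} (hn : n ≠ 0)
    (h : volume (ball z δ \ U) < ((n : ℝ≥0∞) * 2 ^ (Fintype.card ι + Fintype.card κ))⁻¹ *
      volume (ball z δ)) :
    n * volume (ball z δ \ U) < volume (lowerCube z.1 δ ×ˢ lowerCube z.2 δ) := by
  set c : ℝ≥0∞ := n * 2 ^ (Fintype.card ι + Fintype.card κ)
  have hc₀ : c ≠ 0 := by simp [c, hn]
  have hc : c ≠ ∞ := by simp [c, ENNReal.mul_eq_top]
  calc _ < (n : ℝ≥0∞) * (c⁻¹ * volume (ball z δ)) :=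
        ENNReal.mul_lt_mul_right (by exact_mod_cast hn) (natCast_ne_top n) h
    _ = c⁻¹ * c * volume (lowerCube z.1 δ ×ˢ lowerCube z.2 δ) := by
        rw [volume_ball_prod_eq z hδ]
        ring
    _ = _ := by rw [ENNReal.inv_mul_cancel hc₀ hc, one_mul]

theorem add_mem_ball_of_mem_lowerCube_prod {z p w : (ι → ℝ) × (κ → ℝ)} {δ : ℝ} (hδ : 0 < δ)
    (hp : p ∈ lowerCube z.1 δ ×ˢ lowerCube z.2 δ) (hw₁ : ∀ i, w.1 i ∈ Icc 0 δ)
    (hw₂ : ∀ i, w.2 i ∈ Icc 0 δ) : p + w ∈ ball z δ := by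
  rw [← Prod.mk.eta (p := z), ← ball_prod_same]
  exact ⟨add_mem_ball_of_mem_lowerCube hδ hp.1 hw₁, add_mem_ball_of_mem_lowerCube hδ hp.2 hw₂⟩

def squareCorner (δ : ℝ) (c : Bool × Bool) : (ι → ℝ) × (κ → ℝ) :=
  (if c.1 then δ • fun _ => 1 else 0, if c.2 then δ • fun _ => 1 else 0)

theorem add_squareCorner_mem_ball {z p : (ι → ℝ) × (κ → ℝ)} {δ : ℝ} (hδ : 0 < δ)
    (hp : p ∈ lowerCube z.1 δ ×ˢ lowerCube z.2 δ) (c : Bool × Bool) :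
    p + squareCorner δ c ∈ ball z δ :=
  add_mem_ball_of_mem_lowerCube_prod hδ hp (ite_smul_one_mem_Icc hδ.le c.1)
    (ite_smul_one_mem_Icc hδ.le c.2)
end

/-- If `z₀` is a point of Lebesgue density 1 of a measurable set `U ⊆ ℝ^d × ℝ^d`,
then for all sufficiently small `δ > 0` the set `V` of points of the open cube
`z₀ + (-δ,0)^d × (-δ,0)^d` all four of whose translates by `0, (δΔ,0), (0,δΔ), (δΔ,δΔ)`
lie in `U` has positive measure. -/
theorem stmt1 (d : ℕ) (U : Set ((Fin d → ℝ) × (Fin d → ℝ))) (hU : MeasurableSet U)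
    (z₀ : (Fin d → ℝ) × (Fin d → ℝ))
    (hdens : Filter.Tendsto
      (fun r : ℝ => volume (U ∩ Metric.ball z₀ r) / volume (Metric.ball z₀ r))
      (nhdsWithin 0 (Set.Ioi 0)) (nhds 1)) :
    ∃ δ₀ > (0:ℝ), ∀ δ : ℝ, 0 < δ → δ < δ₀ →
      0 < volume {p : (Fin d → ℝ) × (Fin d → ℝ) |
        (∀ i, z₀.1 i - δ < p.1 i ∧ p.1 i < z₀.1 i) ∧
        (∀ i, z₀.2 i - δ < p.2 i ∧ p.2 i < z₀.2 i) ∧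
        p ∈ U ∧
        (p.1 + δ • (fun _ => (1:ℝ)), p.2) ∈ U ∧
        (p.1, p.2 + δ • (fun _ => (1:ℝ))) ∈ U ∧
        (p.1 + δ • (fun _ => (1:ℝ)), p.2 + δ • (fun _ => (1:ℝ))) ∈ U} := by
  have hε : ((Fintype.card (Bool × Bool) : ℝ≥0∞) * 2 ^ (Fintype.card (Fin d) +
      Fintype.card (Fin d)))⁻¹ ≠ 0 := by simp [ENNReal.mul_eq_top]
  have hballs₀ : ∀ᶠ r in 𝓝[>] (0 : ℝ), volume (ball z₀ r) ≠ 0 :=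
    eventually_mem_nhdsWithin.mono fun r hr => (measure_ball_pos _ _ hr).ne'
  obtain ⟨δ₀, hδ₀, hsmall⟩ := (nhdsGT_basis (0 : ℝ)).eventually_iff.mp <|
    eventually_measure_diff_lt_mul hU (fun r => measure_ball_lt_top.ne) hballs₀ hdens hε
  refine ⟨δ₀, hδ₀, fun δ hδ hδδ₀ => ?_⟩
  -- Product `volume` is `volume.prod volume` only after unfolding, which instance search misses.
  have : (volume : Measure ((Fin d → ℝ) × (Fin d → ℝ))).IsAddRightInvariant :=
    Measure.prod.instIsAddRightInvariant
  have hcard := nat_mul_lt_volume_lowerCube_prod hδ Fintype.card_ne_zero (hsmall ⟨hδ, hδδ₀⟩)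
  refine (measure_pos_of_card_mul_lt (w := squareCorner δ)
    (fun k p hp => add_squareCorner_mem_ball hδ hp k) hcard).trans_le (measure_mono ?_)
  rintro ⟨x, y⟩ ⟨hpQ, hpU⟩
  simp only [mem_iInter, Bool.forall_bool, Prod.forall, mem_preimage, squareCorner,
    Bool.false_eq_true, if_true, if_false, Prod.mk_add_mk, add_zero] at hpU
  simp only [lowerCube, mem_prod, mem_univ_pi, mem_Ioo] at hpQ
  exact ⟨hpQ.1, hpQ.2, hpU.1.1, hpU.2.1, hpU.1.2, hpU.2.2⟩
end

section
/- Let 0 ≤ h̄ ∈ L¹(ℝ^d × ℝ^d) and f, g ∈ L¹(ℝ^d) be nonnegative with equal total mass, and let Γ = Γ(f,g)^{h̄} be the set of nonnegative h ∈ L¹ with marginals f and g satisfying h ≤ h̄ a.e. If h ∈ Γ equals 1_W · h̄ almost everywhere for some Lebesgue measurable set W ⊆ ℝ^d × ℝ^d, then h is an extreme point of the convex set Γ. -/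
open MeasureTheory

/-- Membership in `Γ(f,g)^{h̄}`: nonnegative integrable densities on `ℝ^d × ℝ^d`
with marginals `f` and `g`, dominated by `h̄` a.e. -/
def memGamma (d : ℕ) (f g : (Fin d → ℝ) → ℝ)
    (hbar h : (Fin d → ℝ) × (Fin d → ℝ) → ℝ) : Prop :=
  Integrable h ∧ (∀ᵐ z, 0 ≤ h z) ∧ (∀ᵐ z, h z ≤ hbar z) ∧
    (∀ᵐ x, ∫ y, h (x, y) = f x) ∧ (∀ᵐ y, ∫ x, h (x, y) = g y)

/-- Both endpoints of `[0, b]` are extreme points of `[0, b]`. -/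
lemma eq_of_indicator_eq_midpoint {α 𝕜 : Type*} [Field 𝕜] [LinearOrder 𝕜]
    [IsStrictOrderedRing 𝕜] {W : Set α} {b : α → 𝕜} {z : α} {p q : 𝕜}
    (hp₀ : 0 ≤ p) (hpb : p ≤ b z) (hq₀ : 0 ≤ q) (hqb : q ≤ b z)
    (hmid : W.indicator b z = (p + q) / 2) : p = q := by
  by_cases hz : z ∈ W
  · rw [Set.indicator_of_mem hz] at hmid; linarith
  · rw [Set.indicator_of_notMem hz] at hmid; linarith

lemma ae_eq_of_indicator_ae_eq_midpoint {α 𝕜 : Type*} [MeasurableSpace α] {μ : Measure α}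
    [Field 𝕜] [LinearOrder 𝕜] [IsStrictOrderedRing 𝕜] {W : Set α} {b p q : α → 𝕜}
    (hp₀ : ∀ᵐ z ∂μ, 0 ≤ p z) (hpb : ∀ᵐ z ∂μ, p z ≤ b z)
    (hq₀ : ∀ᵐ z ∂μ, 0 ≤ q z) (hqb : ∀ᵐ z ∂μ, q z ≤ b z)
    (hmid : ∀ᵐ z ∂μ, W.indicator b z = (p z + q z) / 2) : p =ᵐ[μ] q := by
  filter_upwards [hp₀, hpb, hq₀, hqb, hmid] with z using eq_of_indicator_eq_midpoint

theorem stmt2_general (d : ℕ) (f g : (Fin d → ℝ) → ℝ) (hbar : (Fin d → ℝ) × (Fin d → ℝ) → ℝ)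
    (h : (Fin d → ℝ) × (Fin d → ℝ) → ℝ)
    (W : Set ((Fin d → ℝ) × (Fin d → ℝ)))
    (hind : ∀ᵐ z, h z = Set.indicator W hbar z) :
    ∀ hp hm : (Fin d → ℝ) × (Fin d → ℝ) → ℝ,
      memGamma d f g hbar hp → memGamma d f g hbar hm →
      (∀ᵐ z, h z = (hp z + hm z) / 2) → hp =ᵐ[volume] hm := by
  rintro hp hm ⟨-, hp_nn, hp_le, -, -⟩ ⟨-, hm_nn, hm_le, -, -⟩ hmid
  refine ae_eq_of_indicator_ae_eq_midpoint (W := W) hp_nn hp_le hm_nn hm_le ?_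
  filter_upwards [hind, hmid] with z hz hz'
  rwa [← hz]

/-- If `h ∈ Γ(f,g)^{h̄}` agrees a.e. with `1_W ⋅ h̄` for a measurable set `W`,
then `h` is an extreme point of `Γ(f,g)^{h̄}`. -/
theorem stmt2 (d : ℕ) (f g : (Fin d → ℝ) → ℝ) (hbar : (Fin d → ℝ) × (Fin d → ℝ) → ℝ)
    (hbar_int : Integrable hbar) (hbar_nn : ∀ᵐ z, 0 ≤ hbar z)
    (hf : Integrable f) (hg : Integrable g) (hf_nn : ∀ᵐ x, 0 ≤ f x)
    (hg_nn : ∀ᵐ y, 0 ≤ g y) (hmass : ∫ x, f x = ∫ y, g y)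
    (h : (Fin d → ℝ) × (Fin d → ℝ) → ℝ) (hmem : memGamma d f g hbar h)
    (W : Set ((Fin d → ℝ) × (Fin d → ℝ))) (hW : MeasurableSet W)
    (hind : ∀ᵐ z, h z = Set.indicator W hbar z) :
    ∀ hp hm : (Fin d → ℝ) × (Fin d → ℝ) → ℝ,
      memGamma d f g hbar hp → memGamma d f g hbar hm →
      (∀ᵐ z, h z = (hp z + hm z) / 2) → hp =ᵐ[volume] hm :=
  stmt2_general d f g hbar h W hind
end

section
/- Let Ω, Λ ⊆ ℝ^d be bounded measurable sets of unit volume, c(x,y) = −x·y, p > 1 with Hölder conjugate q. Then p·1_W minimizes c[h] = ∫ c·h over Γ(1_Ω,1_Λ)^{p·1_{Ω×Λ}} if and only if q·1_{R(W̃)} minimizes c[h] over Γ(1_Ω, 1_{−Λ})^{q·1_{Ω×(−Λ)}}, where W̃ = (Ω×Λ)\W and R(x,y) = (x,−y). -/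
/-!
The map `h ↦ (q/p)·(p·1_{Ω×Λ} − h) ∘ R` sends `Γ(1_Ω,1_Λ)^{p·1_{Ω×Λ}}` into
`Γ(1_Ω,1_{−Λ})^{q·1_{Ω×(−Λ)}}`; the marginals come out right because `(q/p)(p − 1) = 1`.
The same construction for `(Ω, −Λ, q, p)` inverts it, so it is a bijection between the two
feasible sets. Since `c ∘ R = −c`, it changes the cost by the increasing affine map
`t ↦ (q/p)·t − q·c[1_{Ω×Λ}]`, so minimizers correspond, and it sends `p·1_W` to `q·1_{R(W̃)}`.
Boundedness of `Ω` and `Λ` is what makes all these costs finite.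
-/

open MeasureTheory

open Set
open scoped Pointwise

theorem MeasureTheory.integrable_indicator_one {α : Type*} [MeasurableSpace α] {μ : Measure α}
    {S : Set α} (hS : MeasurableSet S) (hμS : μ S ≠ ⊤) : Integrable (S.indicator (1 : α → ℝ)) μ :=
  (integrable_indicator_iff hS).2 (integrableOn_const hμS)

theorem MeasureTheory.Integrable.continuous_mul_of_ae_eq_zero_off_isBounded {X : Type*}
    [PseudoMetricSpace X] [ProperSpace X] [MeasurableSpace X] [OpensMeasurableSpace X]
    {μ : Measure X} {c h : X → ℝ} {S : Set X} (hc : Continuous c) (hh : Integrable h μ)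
    (hS : Bornology.IsBounded S) (hzero : ∀ᵐ z ∂μ, z ∉ S → h z = 0) :
    Integrable (fun z => c z * h z) μ := by
  refine (hh.integrableOn.continuousOn_mul_of_subset hc.continuousOn hS.isCompact_closure
    isClosed_closure.measurableSet subset_rfl).integrable_of_ae_notMem_eq_zero ?_
  filter_upwards [hzero] with z hz hzS
  rw [hz fun h => hzS (subset_closure h), mul_zero]

theorem Real.HolderConjugate.integral_complement {α : Type*} [MeasurableSpace α] {μ : Measure α}
    {a b : ℝ} (hab : a.HolderConjugate b) {u v : α → ℝ} (hu : Integrable u μ)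
    (hv : Integrable v μ) {t : ℝ} (hut : ∫ x, u x ∂μ = t) (hvt : ∫ x, v x ∂μ = t) :
    ∫ x, b / a * (a * u x - v x) ∂μ = t := by
  rw [integral_const_mul, integral_sub (hu.const_mul a) hv, integral_const_mul, hut, hvt]
  field_simp [hab.ne_zero]
  linear_combination t * hab.sub_one_mul_conj

theorem memGamma.ae_eq_zero_of_notMem {d : ℕ} {f g : (Fin d → ℝ) → ℝ}
    {h : (Fin d → ℝ) × (Fin d → ℝ) → ℝ} {A B : Set (Fin d → ℝ)} {a : ℝ}
    (hh : memGamma d f g (fun z => a * (A ×ˢ B).indicator 1 z) h) :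
    ∀ᵐ z, z ∉ A ×ˢ B → h z = 0 := by
  filter_upwards [hh.2.1, hh.2.2.1] with z h0 h1 hz
  simp only [indicator_of_notMem hz, mul_zero] at h1
  exact le_antisymm h1 h0

namespace CapacityConstrainedTransport

variable {d : ℕ}

def reflect (d : ℕ) : ((Fin d → ℝ) × (Fin d → ℝ)) ≃ᵐ ((Fin d → ℝ) × (Fin d → ℝ)) :=
  (MeasurableEquiv.refl _).prodCongr (MeasurableEquiv.neg _)

@[simp]
theorem reflect_apply (z : (Fin d → ℝ) × (Fin d → ℝ)) : reflect d z = (z.1, -z.2) := rfl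

theorem measurePreserving_reflect : MeasurePreserving (reflect d) :=
  (MeasurePreserving.id volume).prod (Measure.measurePreserving_neg volume)

theorem integral_mul_comp_reflect {c : (Fin d → ℝ) × (Fin d → ℝ) → ℝ}
    (hodd : ∀ z, c (z.1, -z.2) = -c z) (g : (Fin d → ℝ) × (Fin d → ℝ) → ℝ) :
    ∫ z, c z * g (z.1, -z.2) = -∫ z, c z * g z := by
  rw [← integral_neg, ← measurePreserving_reflect.integral_comp' (fun z => c z * g (z.1, -z.2))]
  simp [hodd]

theorem memGamma_comp_reflect {f g : (Fin d → ℝ) → ℝ} {hbar h : (Fin d → ℝ) × (Fin d → ℝ) → ℝ}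
    (hh : memGamma d f g hbar h) :
    memGamma d f (fun y => g (-y)) (fun z => hbar (z.1, -z.2)) (fun z => h (z.1, -z.2)) := by
  obtain ⟨hint, hpos, hle, hmarg₁, hmarg₂⟩ := hh
  have hR := (measurePreserving_reflect (d := d)).quasiMeasurePreserving
  refine ⟨(measurePreserving_reflect.integrable_comp_emb (reflect d).measurableEmbedding).2 hint,
    hR.ae hpos, hR.ae hle, ?_,
    (Measure.measurePreserving_neg volume).quasiMeasurePreserving.ae hmarg₂⟩
  filter_upwards [hmarg₁] with x hx
  rw [integral_neg_eq_self (fun y => h (x, y)), hx]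

theorem indicator_prod_neg_one_apply {α G : Type*} [Neg G] (A : Set α) (B : Set G) (z : α × G) :
    (A ×ˢ (-B)).indicator (1 : α × G → ℝ) z = (A ×ˢ B).indicator 1 (z.1, -z.2) :=
  indicator_comp_right (s := A ×ˢ B) (g := 1) fun w : α × G => (w.1, -w.2)

theorem memGamma_complement {A B : Set (Fin d → ℝ)} (hA : MeasurableSet A) (hB : MeasurableSet B)
    (hA1 : volume A = 1) (hB1 : volume B = 1) {a b : ℝ} (hab : a.HolderConjugate b)
    {h : (Fin d → ℝ) × (Fin d → ℝ) → ℝ}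
    (hh : memGamma d (A.indicator 1) (B.indicator 1) (fun z => a * (A ×ˢ B).indicator 1 z) h) :
    memGamma d (A.indicator 1) (B.indicator 1) (fun z => b * (A ×ˢ B).indicator 1 z)
      (fun z => b / a * (a * (A ×ˢ B).indicator 1 z - h z)) := by
  obtain ⟨hint, hpos, hle, hmarg₁, hmarg₂⟩ := hh
  have hAi := integrable_indicator_one (μ := volume) hA (by simp [hA1])
  have hBi := integrable_indicator_one (μ := volume) hB (by simp [hB1])
  have hABi := integrable_indicator_one (μ := volume) (hA.prod hB)
    (by simp [Measure.volume_eq_prod, Measure.prod_prod, hA1, hB1])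
  have hint' := Measure.volume_eq_prod (Fin d → ℝ) (Fin d → ℝ) ▸ hint
  have hba : 0 ≤ b / a := div_nonneg hab.symm.nonneg hab.nonneg
  refine ⟨((hABi.const_mul a).sub hint).const_mul _, ?_, ?_, ?_, ?_⟩
  · filter_upwards [hle] with z hz
    exact mul_nonneg hba (sub_nonneg.2 hz)
  · filter_upwards [hpos] with z hz
    calc b / a * (a * (A ×ˢ B).indicator 1 z - h z) ≤ b / a * (a * (A ×ˢ B).indicator 1 z) := by
          gcongr
          linarith
      _ = b * (A ×ˢ B).indicator 1 z := by field_simp [hab.ne_zero]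
  · filter_upwards [hint'.prod_right_ae, hmarg₁] with x hx hx'
    simp_rw [indicator_prod_one] at *
    refine hab.integral_complement (hBi.const_mul _) hx ?_ hx'
    simp [integral_const_mul, integral_indicator_one hB, measureReal_def, hB1]
  · filter_upwards [hint'.prod_left_ae, hmarg₂] with y hy hy'
    simp_rw [indicator_prod_one] at *
    refine hab.integral_complement (hAi.mul_const _) hy ?_ hy'
    simp [integral_mul_const, integral_indicator_one hA, measureReal_def, hA1]

noncomputable def reflectedComplement (A B : Set (Fin d → ℝ)) (a b : ℝ)
    (h : (Fin d → ℝ) × (Fin d → ℝ) → ℝ) : (Fin d → ℝ) × (Fin d → ℝ) → ℝ :=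
  fun z => b / a * (a * (A ×ˢ B).indicator 1 (z.1, -z.2) - h (z.1, -z.2))

theorem reflectedComplement_reflectedComplement {A B : Set (Fin d → ℝ)} {a b : ℝ} (ha : a ≠ 0)
    (hb : b ≠ 0) (h : (Fin d → ℝ) × (Fin d → ℝ) → ℝ) :
    reflectedComplement A (-B) b a (reflectedComplement A B a b h) = h := by
  funext z
  simp only [reflectedComplement, indicator_prod_neg_one_apply, neg_neg]
  field_simp
  ring

theorem reflectedComplement_indicator {A B : Set (Fin d → ℝ)} {a b : ℝ} (ha : a ≠ 0)
    {W : Set ((Fin d → ℝ) × (Fin d → ℝ))} (hW : W ⊆ A ×ˢ B) :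
    reflectedComplement A B a b (fun z => a * W.indicator 1 z) =
      fun z => b * ((fun w => (w.1, -w.2)) '' ((A ×ˢ B) \ W)).indicator 1 z := by
  have hR : Function.Involutive fun w : (Fin d → ℝ) × (Fin d → ℝ) => (w.1, -w.2) :=
    fun w => by simp
  funext z
  rw [hR.image_eq_preimage_symm]
  change _ = b * ((A ×ˢ B) \ W).indicator 1 (z.1, -z.2)
  rw [indicator_sdiff hW, Pi.sub_apply]
  simp only [reflectedComplement]
  field_simp

theorem memGamma_reflectedComplement {A B : Set (Fin d → ℝ)} (hA : MeasurableSet A)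
    (hB : MeasurableSet B) (hA1 : volume A = 1) (hB1 : volume B = 1) {a b : ℝ}
    (hab : a.HolderConjugate b) {h : (Fin d → ℝ) × (Fin d → ℝ) → ℝ}
    (hh : memGamma d (A.indicator 1) (B.indicator 1) (fun z => a * (A ×ˢ B).indicator 1 z) h) :
    memGamma d (A.indicator 1) ((-B).indicator 1) (fun z => b * (A ×ˢ (-B)).indicator 1 z)
      (reflectedComplement A B a b h) := by
  convert memGamma_comp_reflect (memGamma_complement hA hB hA1 hB1 hab hh) using 2
  · exact indicator_comp_right (s := B) (g := 1) Neg.neg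
  · rw [indicator_prod_neg_one_apply]
  · rfl

theorem integral_mul_reflectedComplement {c : (Fin d → ℝ) × (Fin d → ℝ) → ℝ} (hc : Continuous c)
    (hodd : ∀ z, c (z.1, -z.2) = -c z) {A B : Set (Fin d → ℝ)} (hA : MeasurableSet A)
    (hB : MeasurableSet B) (hAb : Bornology.IsBounded A) (hBb : Bornology.IsBounded B)
    {a b : ℝ} (ha : a ≠ 0) {h : (Fin d → ℝ) × (Fin d → ℝ) → ℝ}
    (hh : memGamma d (A.indicator 1) (B.indicator 1) (fun z => a * (A ×ˢ B).indicator 1 z) h) :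
    ∫ z, c z * reflectedComplement A B a b h z =
      b / a * (∫ z, c z * h z) - b * ∫ z, c z * (A ×ˢ B).indicator 1 z := by
  have hAB := hAb.prod hBb
  have hch := hh.1.continuous_mul_of_ae_eq_zero_off_isBounded hc hAB hh.ae_eq_zero_of_notMem
  have hcI := (integrable_indicator_one (μ := volume) (hA.prod hB) hAB.measure_lt_top.ne
    ).continuous_mul_of_ae_eq_zero_off_isBounded hc hAB
      (ae_of_all _ fun z hz => indicator_of_notMem hz _)
  calc ∫ z, c z * reflectedComplement A B a b h z
      = -∫ z, c z * (b / a * (a * (A ×ˢ B).indicator 1 z - h z)) :=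
        integral_mul_comp_reflect hodd fun w => b / a * (a * (A ×ˢ B).indicator 1 w - h w)
    _ = ∫ z, (b / a * (c z * h z) - b * (c z * (A ×ˢ B).indicator 1 z)) := by
        rw [← integral_neg]
        congr 1 with z
        field_simp
        ring
    _ = b / a * (∫ z, c z * h z) - b * ∫ z, c z * (A ×ˢ B).indicator 1 z := by
        rw [integral_sub (hch.const_mul _) (hcI.const_mul _), integral_const_mul,
          integral_const_mul]

def IsOptimalPlan (c : (Fin d → ℝ) × (Fin d → ℝ) → ℝ) (A B : Set (Fin d → ℝ)) (a : ℝ)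
    (h : (Fin d → ℝ) × (Fin d → ℝ) → ℝ) : Prop :=
  memGamma d (A.indicator 1) (B.indicator 1) (fun z => a * (A ×ˢ B).indicator 1 z) h ∧
    ∀ k, memGamma d (A.indicator 1) (B.indicator 1) (fun z => a * (A ×ˢ B).indicator 1 z) k →
      ∫ z, c z * h z ≤ ∫ z, c z * k z

section Optimality

variable {c : (Fin d → ℝ) × (Fin d → ℝ) → ℝ} {A B : Set (Fin d → ℝ)} {a b : ℝ}

theorem IsOptimalPlan.isOptimalPlan_reflectedComplement (hc : Continuous c)
    (hodd : ∀ z, c (z.1, -z.2) = -c z) (hA : MeasurableSet A) (hB : MeasurableSet B)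
    (hAb : Bornology.IsBounded A) (hBb : Bornology.IsBounded B) (hA1 : volume A = 1)
    (hB1 : volume B = 1) (hab : a.HolderConjugate b) {h : (Fin d → ℝ) × (Fin d → ℝ) → ℝ}
    (hopt : IsOptimalPlan c A B a h) :
    IsOptimalPlan c A (-B) b (reflectedComplement A B a b h) := by
  refine ⟨memGamma_reflectedComplement hA hB hA1 hB1 hab hopt.1, fun k hk => ?_⟩
  have hk' := memGamma_reflectedComplement hA hB.neg hA1 (by rw [Measure.measure_neg, hB1])
    hab.symm hk
  rw [neg_neg] at hk'
  have hkk : reflectedComplement A B a b (reflectedComplement A (-B) b a k) = k := by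
    simpa using reflectedComplement_reflectedComplement (B := -B) hab.symm.ne_zero hab.ne_zero k
  rw [← hkk, integral_mul_reflectedComplement hc hodd hA hB hAb hBb hab.ne_zero hopt.1,
    integral_mul_reflectedComplement hc hodd hA hB hAb hBb hab.ne_zero hk']
  exact sub_le_sub_right (mul_le_mul_of_nonneg_left (hopt.2 _ hk')
    (div_nonneg hab.symm.nonneg hab.nonneg)) _

theorem isOptimalPlan_indicator_iff (hc : Continuous c) (hodd : ∀ z, c (z.1, -z.2) = -c z)
    (hA : MeasurableSet A) (hB : MeasurableSet B) (hAb : Bornology.IsBounded A)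
    (hBb : Bornology.IsBounded B) (hA1 : volume A = 1) (hB1 : volume B = 1)
    (hab : a.HolderConjugate b) {W : Set ((Fin d → ℝ) × (Fin d → ℝ))} (hW : W ⊆ A ×ˢ B) :
    IsOptimalPlan c A B a (fun z => a * W.indicator 1 z) ↔
      IsOptimalPlan c A (-B) b
        (fun z => b * ((fun w => (w.1, -w.2)) '' ((A ×ˢ B) \ W)).indicator 1 z) := by
  rw [← reflectedComplement_indicator hab.ne_zero hW]
  refine ⟨fun h => h.isOptimalPlan_reflectedComplement hc hodd hA hB hAb hBb hA1 hB1 hab,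
    fun h => ?_⟩
  have := h.isOptimalPlan_reflectedComplement hc hodd hA hB.neg hAb hBb.neg hA1
    (by rw [Measure.measure_neg, hB1]) hab.symm
  rwa [neg_neg, reflectedComplement_reflectedComplement hab.ne_zero hab.symm.ne_zero] at this

end Optimality

end CapacityConstrainedTransport

open CapacityConstrainedTransport

theorem stmt19_general (d : ℕ) (Ω Λ : Set (Fin d → ℝ))
    (hΩm : MeasurableSet Ω) (hΛm : MeasurableSet Λ)
    (hΩb : Bornology.IsBounded Ω) (hΛb : Bornology.IsBounded Λ)
    (hΩ1 : volume Ω = 1) (hΛ1 : volume Λ = 1)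
    (p q : ℝ) (hp : 1 < p) (hpq : 1 / p + 1 / q = 1)
    (W : Set ((Fin d → ℝ) × (Fin d → ℝ)))
    (hWsub : W ⊆ Ω ×ˢ Λ) :
    ((memGamma d (Set.indicator Ω fun _ => 1) (Set.indicator Λ fun _ => 1)
        (fun z => p * Set.indicator (Ω ×ˢ Λ) (fun _ => 1) z)
        (fun z => p * Set.indicator W (fun _ => 1) z)) ∧
      (∀ k, memGamma d (Set.indicator Ω fun _ => 1) (Set.indicator Λ fun _ => 1)
          (fun z => p * Set.indicator (Ω ×ˢ Λ) (fun _ => 1) z) k →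
        (∫ z : (Fin d → ℝ) × (Fin d → ℝ),
            (-(∑ i : Fin d, z.1 i * z.2 i)) * (p * Set.indicator W (fun _ => 1) z))
          ≤ ∫ z : (Fin d → ℝ) × (Fin d → ℝ), (-(∑ i : Fin d, z.1 i * z.2 i)) * k z))
    ↔
    ((memGamma d (Set.indicator Ω fun _ => 1)
        (Set.indicator (Neg.neg '' Λ) fun _ => 1)
        (fun z => q * Set.indicator (Ω ×ˢ (Neg.neg '' Λ)) (fun _ => 1) z)
        (fun z => q * Set.indicator
          ((fun w : (Fin d → ℝ) × (Fin d → ℝ) => (w.1, -w.2)) '' ((Ω ×ˢ Λ) \ W))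
          (fun _ => 1) z)) ∧
      (∀ k, memGamma d (Set.indicator Ω fun _ => 1)
          (Set.indicator (Neg.neg '' Λ) fun _ => 1)
          (fun z => q * Set.indicator (Ω ×ˢ (Neg.neg '' Λ)) (fun _ => 1) z) k →
        (∫ z : (Fin d → ℝ) × (Fin d → ℝ),
            (-(∑ i : Fin d, z.1 i * z.2 i)) *
              (q * Set.indicator
                ((fun w : (Fin d → ℝ) × (Fin d → ℝ) => (w.1, -w.2)) '' ((Ω ×ˢ Λ) \ W))
                (fun _ => 1) z))
          ≤ ∫ z : (Fin d → ℝ) × (Fin d → ℝ), (-(∑ i : Fin d, z.1 i * z.2 i)) * k z)) := by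
  have hpq' : p.HolderConjugate q := Real.holderConjugate_iff.2 ⟨hp, by simpa only [one_div] using hpq⟩
  rw [image_neg_eq_neg]
  exact isOptimalPlan_indicator_iff (c := fun z => -(∑ i, z.1 i * z.2 i)) (by fun_prop)
    (fun z => by simp) hΩm hΛm hΩb hΛb hΩ1 hΛ1 hpq' hWsub

/-- Symmetry of capacity constrained transport for `c(x,y) = −x·y`: `p·1_W` minimizes
the cost over `Γ(1_Ω,1_Λ)^{p·1_{Ω×Λ}}` iff `q·1_{R(W̃)}` minimizes the cost over
`Γ(1_Ω,1_{−Λ})^{q·1_{Ω×(−Λ)}}`, where `W̃ = (Ω×Λ)\W`, `R(x,y) = (x,−y)` and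
`1/p + 1/q = 1`. -/
theorem stmt19 (d : ℕ) (Ω Λ : Set (Fin d → ℝ))
    (hΩm : MeasurableSet Ω) (hΛm : MeasurableSet Λ)
    (hΩb : Bornology.IsBounded Ω) (hΛb : Bornology.IsBounded Λ)
    (hΩ1 : volume Ω = 1) (hΛ1 : volume Λ = 1)
    (p q : ℝ) (hp : 1 < p) (hpq : 1 / p + 1 / q = 1)
    (W : Set ((Fin d → ℝ) × (Fin d → ℝ))) (hWm : MeasurableSet W)
    (hWsub : W ⊆ Ω ×ˢ Λ) :
    ((memGamma d (Set.indicator Ω fun _ => 1) (Set.indicator Λ fun _ => 1)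
        (fun z => p * Set.indicator (Ω ×ˢ Λ) (fun _ => 1) z)
        (fun z => p * Set.indicator W (fun _ => 1) z)) ∧
      (∀ k, memGamma d (Set.indicator Ω fun _ => 1) (Set.indicator Λ fun _ => 1)
          (fun z => p * Set.indicator (Ω ×ˢ Λ) (fun _ => 1) z) k →
        (∫ z : (Fin d → ℝ) × (Fin d → ℝ),
            (-(∑ i : Fin d, z.1 i * z.2 i)) * (p * Set.indicator W (fun _ => 1) z))
          ≤ ∫ z : (Fin d → ℝ) × (Fin d → ℝ), (-(∑ i : Fin d, z.1 i * z.2 i)) * k z))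
    ↔
    ((memGamma d (Set.indicator Ω fun _ => 1)
        (Set.indicator (Neg.neg '' Λ) fun _ => 1)
        (fun z => q * Set.indicator (Ω ×ˢ (Neg.neg '' Λ)) (fun _ => 1) z)
        (fun z => q * Set.indicator
          ((fun w : (Fin d → ℝ) × (Fin d → ℝ) => (w.1, -w.2)) '' ((Ω ×ˢ Λ) \ W))
          (fun _ => 1) z)) ∧
      (∀ k, memGamma d (Set.indicator Ω fun _ => 1)
          (Set.indicator (Neg.neg '' Λ) fun _ => 1)
          (fun z => q * Set.indicator (Ω ×ˢ (Neg.neg '' Λ)) (fun _ => 1) z) k →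
        (∫ z : (Fin d → ℝ) × (Fin d → ℝ),
            (-(∑ i : Fin d, z.1 i * z.2 i)) *
              (q * Set.indicator
                ((fun w : (Fin d → ℝ) × (Fin d → ℝ) => (w.1, -w.2)) '' ((Ω ×ˢ Λ) \ W))
                (fun _ => 1) z))
          ≤ ∫ z : (Fin d → ℝ) × (Fin d → ℝ), (-(∑ i : Fin d, z.1 i * z.2 i)) * k z)) :=
  stmt19_general d Ω Λ hΩm hΛm hΩb hΛb hΩ1 hΛ1 p q hp hpq W hWsub
end
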